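/- Let γ ∈ (0,1], x_0 ∈ ℝ, R > 0 and let g satisfy Assumption HS with these data. Let A_1, A_2 ∈ C_b^∞(ℝ^d × ℝ^d, ℂ^{n×n}) be Hermitian matrix-valued symbols and assume ∂Λ and ∂Γ have finite (d−1)-dimensional surface measure. Then for every q ∈ (0,γ) there exists a constant C > 0, independent of g and R, such that |W_1(U(g;A_1,A_2); ∂Λ, ∂Γ)| ≤ C R^{γ−q} ⦀g⦀₂. -/

import Mathlib

open MeasureTheory Filter Matrix Set Asymptotics Bornology
open scoped ENNReal RealInnerProductSpace ComplexOrder MeasureTheory Topology NNReal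

noncomputable section

namespace Widom

/-- Euclidean configuration/momentum space `ℝ^d`. -/
abbrev E (d : ℕ) : Type := EuclideanSpace ℝ (Fin d)

/-- Complex `n × n` matrices. -/
abbrev Mat (n : ℕ) : Type := Matrix (Fin n) (Fin n) ℂ

/-- The Hilbert space `L²(ℝ^d) ⊗ ℂ^n ≅ L²(ℝ^d, ℂ^n)`. -/
abbrev Hs (d n : ℕ) : Type :=
  MeasureTheory.Lp (E := EuclideanSpace ℂ (Fin n)) 2 (volume : Measure (E d))

/-- Bounded operators on `L²(ℝ^d) ⊗ ℂ^n`. -/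
abbrev CLM (d n : ℕ) : Type := Hs d n →L[ℂ] Hs d n

/-- Action of a matrix on a vector of `ℂ^n` (with its Euclidean structure). -/
def mulVecE {n : ℕ} (M : Mat n) (v : EuclideanSpace ℂ (Fin n)) : EuclideanSpace ℂ (Fin n) :=
  (WithLp.equiv 2 (Fin n → ℂ)).symm (M.mulVec ((WithLp.equiv 2 (Fin n → ℂ)) v))

/-! ### Iterated partial derivatives and symbol norms -/

/-- Iterated directional derivatives of a scalar function along a list of directions. -/
def listDeriv {V : Type*} [NormedAddCommGroup V] [NormedSpace ℝ V]
    (vs : List V) (f : V → ℂ) : V → ℂ :=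
  vs.foldr (fun v g x => fderiv ℝ g x v) f

/-- The list of directions encoded by a multi-index `α`. -/
def multiList {V : Type*} {d : ℕ} (dir : Fin d → V) (α : Fin d → ℕ) : List V :=
  (List.finRange d).flatMap fun i => List.replicate (α i) (dir i)

/-- The degree `|α|` of a multi-index. -/
def deg {d : ℕ} (α : Fin d → ℕ) : ℕ := ∑ i, α i

/-- The partial derivative `∂_x^α ∂_ξ^β A(x,ξ)` of a matrix-valued symbol, taken entrywise. -/
def symDeriv {d n : ℕ} (A : E d → E d → Mat n) (α β : Fin d → ℕ) (z : E d × E d) : Mat n :=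
  Matrix.of fun i j =>
    listDeriv
      (multiList (fun i => ((EuclideanSpace.single i (1:ℝ) : E d), (0 : E d))) α ++
        multiList (fun i => ((0 : E d), (EuclideanSpace.single i (1:ℝ) : E d))) β)
      (fun p : E d × E d => A p.1 p.2 i j) z

/-- The partial derivative `∂_x^α ∂_y^β ∂_ξ^γ F(x,y,ξ)` of a matrix-valued amplitude. -/
def ampDeriv {d n : ℕ} (F : E d → E d → E d → Mat n) (α β γ : Fin d → ℕ)
    (z : E d × E d × E d) : Mat n :=
  Matrix.of fun i j =>
    listDeriv
      (multiList (fun i => ((EuclideanSpace.single i (1:ℝ) : E d), (0 : E d), (0 : E d))) α ++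
        multiList (fun i => ((0 : E d), (EuclideanSpace.single i (1:ℝ) : E d), (0 : E d))) β ++
        multiList (fun i => ((0 : E d), (0 : E d), (EuclideanSpace.single i (1:ℝ) : E d))) γ)
      (fun p : E d × E d × E d => F p.1 p.2.1 p.2.2 i j) z

/-- `tr_{ℂ^n} |M|`, the trace of the absolute value `|M| = (M^*M)^{1/2}` of a matrix. -/
def traceAbs {n : ℕ} (M : Mat n) : ℝ :=
  (((Matrix.isHermitian_conjTranspose_mul_self M).eigenvectorUnitary.1 *
      Matrix.diagonal (((↑) : ℝ → ℂ) ∘ Real.sqrt ∘ (Matrix.isHermitian_conjTranspose_mul_self M).eigenvalues) *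
      (star (Matrix.isHermitian_conjTranspose_mul_self M).eigenvectorUnitary : Mat n)).trace).re

/-- The symbol norm `N^{(m_x, m_ξ)}(A)` of a matrix-valued symbol. -/
def normSym {d n : ℕ} (A : E d → E d → Mat n) (mx mξ : ℕ) : ℝ :=
  ⨆ (α : Fin d → ℕ) (β : Fin d → ℕ) (_ : deg α ≤ mx) (_ : deg β ≤ mξ) (z : E d × E d),
    traceAbs (symDeriv A α β z)

/-- The symbol norm `N^{(m_x, m_y, m_ξ)}(F)` of a matrix-valued amplitude. -/
def normAmp {d n : ℕ} (F : E d → E d → E d → Mat n) (mx my mξ : ℕ) : ℝ :=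
  ⨆ (α : Fin d → ℕ) (β : Fin d → ℕ) (γ : Fin d → ℕ)
    (_ : deg α ≤ mx) (_ : deg β ≤ my) (_ : deg γ ≤ mξ) (z : E d × E d × E d),
    traceAbs (ampDeriv F α β γ z)

/-! ### Smoothness classes of symbols -/

/-- `A ∈ C_b^∞(ℝ^d × ℝ^d, ℂ^{n×n})`: a matrix-valued symbol, i.e. smooth with all
partial derivatives bounded (expressed entrywise). -/
structure IsSymbol {d n : ℕ} (A : E d → E d → Mat n) : Prop where
  smooth : ∀ i j, ContDiff ℝ (⊤ : ℕ∞) (fun p : E d × E d => A p.1 p.2 i j)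
  bounded : ∀ i j (k : ℕ), ∃ C : ℝ,
    ∀ p : E d × E d, ‖iteratedFDeriv ℝ k (fun q : E d × E d => A q.1 q.2 i j) p‖ ≤ C

/-- `F ∈ C_b^∞(ℝ^d × ℝ^d × ℝ^d, ℂ^{n×n})`: a matrix-valued amplitude. -/
structure IsAmplitude {d n : ℕ} (F : E d → E d → E d → Mat n) : Prop where
  smooth : ∀ i j, ContDiff ℝ (⊤ : ℕ∞) (fun p : E d × E d × E d => F p.1 p.2.1 p.2.2 i j)
  bounded : ∀ i j (k : ℕ), ∃ C : ℝ,
    ∀ p : E d × E d × E d,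
      ‖iteratedFDeriv ℝ k (fun q : E d × E d × E d => F q.1 q.2.1 q.2.2 i j) p‖ ≤ C

/-- `A ∈ C_b^∞(ℝ^d, ℂ^{n×n})`: a matrix-valued symbol depending only on momentum. -/
structure IsSymbolMom {d n : ℕ} (A : E d → Mat n) : Prop where
  smooth : ∀ i j, ContDiff ℝ (⊤ : ℕ∞) (fun ξ : E d => A ξ i j)
  bounded : ∀ i j (k : ℕ), ∃ C : ℝ, ∀ ξ : E d, ‖iteratedFDeriv ℝ k (fun ζ : E d => A ζ i j) ξ‖ ≤ C

/-- Compact support in both variables. -/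
def CompactSupportBoth {d n : ℕ} (A : E d → E d → Mat n) : Prop :=
  ∃ K₁ K₂ : Set (E d), IsCompact K₁ ∧ IsCompact K₂ ∧ ∀ x ξ, A x ξ ≠ 0 → x ∈ K₁ ∧ ξ ∈ K₂

/-- Compact support in the second (momentum) variable. -/
def CompactSupportSnd {d n : ℕ} (A : E d → E d → Mat n) : Prop :=
  ∃ K : Set (E d), IsCompact K ∧ ∀ x ξ, A x ξ ≠ 0 → ξ ∈ K

/-! ### Quantisation -/

/-- `T = Op_L^{lr}(F)`: the bounded operator whose action on (the `L²`-classes of) Schwartz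
functions is given by the iterated oscillatory integral
`(Op_L^{lr}(F)u)(x) = (L/2π)^d ∫ dξ ∫ dy e^{iLξ·(x−y)} F(x,y,ξ) u(y)`. -/
def IsOpAmp {d n : ℕ} (L : ℝ) (F : E d → E d → E d → Mat n) (T : CLM d n) : Prop :=
  ∀ (u : SchwartzMap (E d) (EuclideanSpace ℂ (Fin n))) (f : Hs d n),
    (⇑f =ᵐ[volume] fun x => u x) →
      (⇑(T f) =ᵐ[volume] fun x =>
        (L / (2 * Real.pi)) ^ d •
          ∫ ξ : E d, ∫ y : E d,
            Complex.exp (Complex.I * (L * ⟪ξ, x - y⟫)) • mulVecE (F x y ξ) (u y))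

/-- `T = Op_L^l(A)` for a symbol `A(x,ξ)`. -/
def IsOpL {d n : ℕ} (L : ℝ) (A : E d → E d → Mat n) (T : CLM d n) : Prop :=
  IsOpAmp L (fun x _ ξ => A x ξ) T

/-- `T = Op_L^r(A)` for a symbol `A(y,ξ)`. -/
def IsOpR {d n : ℕ} (L : ℝ) (A : E d → E d → Mat n) (T : CLM d n) : Prop :=
  IsOpAmp L (fun _ y ξ => A y ξ) T

open Classical in
/-- Choice of an operator with a given property (zero if none exists). -/
def chooseOp {d n : ℕ} (P : CLM d n → Prop) : CLM d n :=
  if h : ∃ T, P T then h.choose else 0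

/-- The operator `Op_L^{lr}(F)` of a matrix-valued amplitude. -/
def opAmp {d n : ℕ} (L : ℝ) (F : E d → E d → E d → Mat n) : CLM d n :=
  chooseOp (IsOpAmp L F)

/-- The left quantisation `Op_L^l(A)` of a matrix-valued symbol. -/
def opL {d n : ℕ} (L : ℝ) (A : E d → E d → Mat n) : CLM d n :=
  opAmp L (fun x _ ξ => A x ξ)

/-- The right quantisation `Op_L^r(A)` of a matrix-valued symbol. -/
def opR {d n : ℕ} (L : ℝ) (A : E d → E d → Mat n) : CLM d n :=
  opAmp L (fun _ y ξ => A y ξ)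

/-- `Op_L(m)`: the Fourier multiplier attached to a symbol depending only on momentum. -/
def opM {d n : ℕ} (L : ℝ) (m : E d → Mat n) : CLM d n :=
  opAmp L (fun _ _ ξ => m ξ)

/-- The momentum-space indicator operator `Op_L(1_Γ)`. -/
def indMom (n : ℕ) {d : ℕ} (L : ℝ) (Γ : Set (E d)) : CLM d n :=
  opM L fun ξ => Γ.indicator (fun _ => (1 : Mat n)) ξ

/-- `T = 1_Λ`: multiplication by the indicator function of `Λ` (tensored with `1_n`). -/
def IsIndicatorMul {d n : ℕ} (Λ : Set (E d)) (T : CLM d n) : Prop :=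
  ∀ f : Hs d n, ⇑(T f) =ᵐ[volume] fun x => Λ.indicator (fun _ => (1:ℂ)) x • f x

/-- The position-space indicator operator `1_Λ`. -/
def indMul (n : ℕ) {d : ℕ} (Λ : Set (E d)) : CLM d n :=
  chooseOp (IsIndicatorMul Λ)

/-- Real part of an operator, `Re T = (T + T^*)/2`. -/
def opRe {d n : ℕ} (T : CLM d n) : CLM d n :=
  (2⁻¹ : ℂ) • (T + ContinuousLinearMap.adjoint T)

/-- Hermitian part of a matrix, `Re M = (M + M^*)/2`. -/
def hermPart {n : ℕ} (M : Mat n) : Mat n := (2⁻¹ : ℂ) • (M + Mᴴ)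

/-- The truncated Wiener–Hopf operator `T_L(A; Λ, Γ)`. -/
def T_L {d n : ℕ} (L : ℝ) (A : E d → E d → Mat n) (Λ Γ : Set (E d)) : CLM d n :=
  indMul n Λ * indMom n L Γ * opL L A * indMom n L Γ * indMul n Λ

/-- The symmetrised truncated Wiener–Hopf operator `S_L(A; Λ, Γ)`. -/
def S_L {d n : ℕ} (L : ℝ) (A : E d → E d → Mat n) (Λ Γ : Set (E d)) : CLM d n :=
  indMul n Λ * indMom n L Γ * opRe (opL L fun x ξ => hermPart (A x ξ)) *
    indMom n L Γ * indMul n Λ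

/-- `D_L(A₁, A₂; Λ, Γ) = T_L(A₁; Λ, Γ) + T_L(A₂; Λ, Γ^c)`. -/
def D_L {d n : ℕ} (L : ℝ) (A₁ A₂ : E d → E d → Mat n) (Λ Γ : Set (E d)) : CLM d n :=
  T_L L A₁ Λ Γ + T_L L A₂ Λ Γᶜ

/-- `G_L(A₁, A₂; Λ, Γ) = S_L(A₁; Λ, Γ) + S_L(A₂; Λ, Γ^c)`. -/
def G_L {d n : ℕ} (L : ℝ) (A₁ A₂ : E d → E d → Mat n) (Λ Γ : Set (E d)) : CLM d n :=
  S_L L A₁ Λ Γ + S_L L A₂ Λ Γᶜ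

/-- `S_L` for symbols depending only on momentum. -/
def S_Lmom {d n : ℕ} (L : ℝ) (A : E d → Mat n) (Λ Γ : Set (E d)) : CLM d n :=
  indMul n Λ * indMom n L Γ * opM L (fun ξ => hermPart (A ξ)) * indMom n L Γ * indMul n Λ

/-- `G_L` for symbols depending only on momentum. -/
def G_Lmom {d n : ℕ} (L : ℝ) (A₁ A₂ : E d → Mat n) (Λ Γ : Set (E d)) : CLM d n :=
  S_Lmom L A₁ Λ Γ + S_Lmom L A₂ Λ Γᶜ

/-! ### Trace and Schatten–von Neumann quasi-norms -/

/-- A fixed Hilbert basis of `L²(ℝ^d) ⊗ ℂ^n`. -/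
def hBasisSet (d n : ℕ) : Set (Hs d n) := (exists_hilbertBasis ℂ (Hs d n)).choose

/-- A fixed Hilbert basis of `L²(ℝ^d) ⊗ ℂ^n`. -/
def hBasis (d n : ℕ) : HilbertBasis (hBasisSet d n) ℂ (Hs d n) :=
  (exists_hilbertBasis ℂ (Hs d n)).choose_spec.choose

/-- The trace of a (trace-class) operator on `L²(ℝ^d) ⊗ ℂ^n`. -/
def opTrace {d n : ℕ} (T : CLM d n) : ℂ :=
  ∑' i : hBasisSet d n, @inner ℂ _ _ (hBasis d n i) (T (hBasis d n i))

/-- The `k`-th approximation number (= singular value `s_{k+1}`) of an operator. -/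
def approxNum {d n : ℕ} (T : CLM d n) (k : ℕ) : ℝ :=
  sInf { r : ℝ | ∃ F : CLM d n,
    Module.rank ℂ (LinearMap.range (F : Hs d n →ₗ[ℂ] Hs d n)) ≤ k ∧ r = ‖T - F‖ }

/-- `‖T‖_q^q = ∑_k s_k(T)^q`, the `q`-th power of the Schatten–von Neumann quasi-norm,
as an extended real (so that finiteness is part of any bound). -/
def schattenQ {d n : ℕ} (q : ℝ) (T : CLM d n) : ℝ≥0∞ :=
  ∑' k : ℕ, (ENNReal.ofReal (approxNum T k)) ^ q

/-! ### Basic and admissible domains -/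

/-- A basic domain: the region above the graph of a Lipschitz function in suitable
(rotated/relabelled) Cartesian coordinates. For `d = 1` this yields open half-lines. -/
def IsBasicDomain {d : ℕ} (Ω : Set (E d)) : Prop :=
  ∃ (e : E d ≃ₗᵢ[ℝ] WithLp 2 (EuclideanSpace ℝ (Fin (d - 1)) × ℝ))
    (Φ : EuclideanSpace ℝ (Fin (d - 1)) → ℝ) (K : ℝ≥0),
      LipschitzWith K Φ ∧
      Ω = { x : E d |
        Φ ((WithLp.equiv 2 (EuclideanSpace ℝ (Fin (d - 1)) × ℝ) (e x)).1) <
          (WithLp.equiv 2 (EuclideanSpace ℝ (Fin (d - 1)) × ℝ) (e x)).2 }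

/-- A piecewise `C^m` function: it agrees with globally `C^m` functions on each member of a
finite family of pairwise disjoint open sets whose union is dense. -/
def IsPiecewiseCm {k : ℕ} (m : ℕ) (Φ : EuclideanSpace ℝ (Fin k) → ℝ) : Prop :=
  ∃ (N : ℕ) (P : Fin N → Set (EuclideanSpace ℝ (Fin k)))
    (Ψ : Fin N → EuclideanSpace ℝ (Fin k) → ℝ),
      (∀ j, IsOpen (P j)) ∧ (Pairwise fun i j => Disjoint (P i) (P j)) ∧
      Dense (⋃ j, P j) ∧ (∀ j, ContDiff ℝ (m : ℕ∞) (Ψ j)) ∧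
      ∀ j, ∀ x ∈ P j, Φ x = Ψ j x

/-- A piecewise `C^m`-basic domain. -/
def IsBasicDomainPW {d : ℕ} (m : ℕ) (Ω : Set (E d)) : Prop :=
  ∃ (e : E d ≃ₗᵢ[ℝ] WithLp 2 (EuclideanSpace ℝ (Fin (d - 1)) × ℝ))
    (Φ : EuclideanSpace ℝ (Fin (d - 1)) → ℝ) (K : ℝ≥0),
      LipschitzWith K Φ ∧ IsPiecewiseCm m Φ ∧
      Ω = { x : E d |
        Φ ((WithLp.equiv 2 (EuclideanSpace ℝ (Fin (d - 1)) × ℝ) (e x)).1) <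
          (WithLp.equiv 2 (EuclideanSpace ℝ (Fin (d - 1)) × ℝ) (e x)).2 }

/-- An admissible domain: locally representable by basic domains. -/
def IsAdmissible {d : ℕ} (Ω : Set (E d)) : Prop :=
  ∀ x : E d, ∃ r > (0:ℝ), ∃ Ω₀ : Set (E d),
    IsBasicDomain Ω₀ ∧ Metric.ball x r ∩ Ω = Metric.ball x r ∩ Ω₀

/-- A piecewise `C^m`-admissible domain. -/
def IsAdmissiblePW {d : ℕ} (m : ℕ) (Ω : Set (E d)) : Prop :=
  ∀ x : E d, ∃ r > (0:ℝ), ∃ Ω₀ : Set (E d),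
    IsBasicDomainPW m Ω₀ ∧ Metric.ball x r ∩ Ω = Metric.ball x r ∩ Ω₀

/-! ### Surface measure, normals and the asymptotic coefficients -/

/-- The surface measure: the `(d-1)`-dimensional Hausdorff measure on `ℝ^d`. -/
def surfMeasure (d : ℕ) : Measure (E d) := MeasureTheory.Measure.hausdorffMeasure ((d : ℝ) - 1)

/-- `v` is the (measure-theoretic) exterior unit normal of `Ω` at `x`. -/
def IsExteriorNormalAt {d : ℕ} (Ω : Set (E d)) (x v : E d) : Prop :=
  ‖v‖ = 1 ∧
  (∀ ε > (0:ℝ), Tendsto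
    (fun r : ℝ => (volume (Ω ∩ Metric.ball x r ∩ { y | ε * r < ⟪y - x, v⟫ })).toReal / r ^ d)
    (𝓝[>] 0) (𝓝 0)) ∧
  (∀ ε > (0:ℝ), Tendsto
    (fun r : ℝ => (volume (Ωᶜ ∩ Metric.ball x r ∩ { y | ⟪y - x, v⟫ < -(ε * r) })).toReal / r ^ d)
    (𝓝[>] 0) (𝓝 0))

open Classical in
/-- The exterior unit normal of `Ω` at `x` (zero where it does not exist). -/
def normalAt {d : ℕ} (Ω : Set (E d)) (x : E d) : E d :=
  if h : ∃ v, IsExteriorNormalAt Ω x v then h.choose else 0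

/-- The volume coefficient `𝔚₀(b; Λ, Γ)`. -/
def W0 {d : ℕ} (b : E d → E d → ℂ) (Λ Γ : Set (E d)) : ℂ :=
  ((2 * Real.pi) ^ d)⁻¹ • ∫ x in Λ, ∫ ξ in Γ, b x ξ

/-- The boundary coefficient `𝔚₁(b; ∂Λ, ∂Γ)`. -/
def W1 {d : ℕ} (b : E d → E d → ℂ) (Λ Γ : Set (E d)) : ℂ :=
  if d = 1 then
    ∑' p : ↥(frontier Λ ×ˢ frontier Γ), b (p : E d × E d).1 (p : E d × E d).2
  else
    ((2 * Real.pi) ^ (d - 1))⁻¹ •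
      ∫ x in frontier Λ,
        (∫ ξ in frontier Γ, |⟪normalAt Λ x, normalAt Γ ξ⟫| • b x ξ ∂(surfMeasure d))
        ∂(surfMeasure d)

/-- The symbol `𝔄(g; b)` entering the boundary coefficient. -/
def frakA {d : ℕ} (g : ℝ → ℂ) (b : E d → E d → ℝ) (x ξ : E d) : ℂ :=
  ((2 * Real.pi) ^ 2)⁻¹ •
    ∫ t in (0:ℝ)..1, (g (t * b x ξ) - (t : ℂ) * g (b x ξ)) / ((t * (1 - t) : ℝ) : ℂ)

/-- The scalar symbol `𝔘(g; B₁, B₂)` (pointwise in the matrices), for a given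
application `gM` of the test function to matrices. -/
def frakU {n : ℕ} (gM : Mat n → Mat n) (B₁ B₂ : Mat n) : ℂ :=
  ((2 * Real.pi) ^ 2)⁻¹ •
    ∫ t in (0:ℝ)..1,
      ((gM (t • B₁ + (1 - t) • B₂)).trace - t • (gM B₁).trace - (1 - t) • (gM B₂).trace) /
        ((t * (1 - t) : ℝ) : ℂ)

/-! ### Test functions applied to matrices and operators -/

/-- The `m`-th Taylor coefficient of `g` at the origin. -/
def taylorCoeff (g : ℂ → ℂ) (m : ℕ) : ℂ := iteratedDeriv m g 0 / m.factorial

/-- An analytic function applied to a matrix via its power series at `0`. -/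
def matAnalytic {n : ℕ} (g : ℂ → ℂ) (M : Mat n) : Mat n :=
  ∑' m : ℕ, taylorCoeff g m • M ^ m

/-- An analytic function applied to a bounded operator via its power series at `0`. -/
def opAnalytic {d n : ℕ} (g : ℂ → ℂ) (T : CLM d n) : CLM d n :=
  ∑' m : ℕ, taylorCoeff g m • T ^ m

/-- `g^{|1|}(t) = ∑_{m≥2} (m-1)|ω_m| t^{m-1}` for `g(z) = ∑_m ω_m z^m`. -/
def gAbs1 (g : ℂ → ℂ) (t : ℝ) : ℝ :=
  ∑' m : ℕ, (m : ℝ) * ‖taylorCoeff g (m + 1)‖ * t ^ m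

/-- The quantity `t_A = sup_{L ≥ 1} ‖Op_L^l(A)‖ + N^{(d+1,d+2)}(A)`. -/
def tOf {d n : ℕ} (A : E d → E d → Mat n) : ℝ :=
  (⨆ (L : ℝ) (_ : 1 ≤ L), ‖opL L A‖) + normSym A (d + 1) (d + 2)

/-- A smooth compactly supported cutoff equal to `1` on `S`. -/
def IsCutoff {d : ℕ} (S : Set (E d)) (φ : E d → ℝ) : Prop :=
  ContDiff ℝ (⊤ : ℕ∞) φ ∧ HasCompactSupport φ ∧ ∀ x ∈ S, φ x = 1

/-- The radius `t₀ = t_{A₁} + t_{A₂} + t_{B₁} + t_{B₂}` with `B₁ = A₁φψ`, `B₂ = A₂φ`. -/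
def t0Of {d n : ℕ} (A₁ A₂ : E d → E d → Mat n) (φ ψ : E d → ℝ) : ℝ :=
  tOf A₁ + tOf A₂ + tOf (fun x ξ => (φ x * ψ ξ) • A₁ x ξ) + tOf (fun x ξ => φ x • A₂ x ξ)

/-- `sup_x |g^{(k)}(x)|`. -/
def supDeriv (g : ℝ → ℝ) (k : ℕ) : ℝ := ⨆ x : ℝ, |iteratedDeriv k g x|

/-- `max_{0 ≤ k ≤ 2} ‖g^{(k)}‖_∞`. -/
def c2Norm (g : ℝ → ℝ) : ℝ := max (supDeriv g 0) (max (supDeriv g 1) (supDeriv g 2))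

/-! ### Classes of non-smooth test functions -/

/-- Assumption on test functions with a single Hölder singularity at `x₀`
(Assumption 4.2 of the paper). -/
structure AssumptionHS (γ x₀ R : ℝ) (g : ℝ → ℝ) : Prop where
  cont : Continuous g
  supp : tsupport g ⊆ Set.Ioo (x₀ - R) (x₀ + R)
  c2 : ∀ x ∈ Set.Ioo (x₀ - R) (x₀ + R) \ {x₀}, ContDiffAt ℝ 2 g x
  bdd : ∃ C : ℝ, ∀ k ≤ 2, ∀ x ∈ Set.Ioo (x₀ - R) (x₀ + R) \ {x₀},
    |iteratedDeriv k g x| ≤ C * |x - x₀| ^ (γ - (k : ℝ))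

/-- The norm `⦀g⦀_l = max_{0≤k≤l} sup_{x ∈ I \ {x₀}} |g^{(k)}(x)| |x-x₀|^{-γ+k}`. -/
def hsNorm (γ x₀ R : ℝ) (g : ℝ → ℝ) (l : ℕ) : ℝ :=
  ⨆ (k : {k : ℕ // k ≤ l}) (x : {x : ℝ // x ∈ Set.Ioo (x₀ - R) (x₀ + R) \ {x₀}}),
    |iteratedDeriv (k : ℕ) g (x : ℝ)| * |(x : ℝ) - x₀| ^ (((k : ℕ) : ℝ) - γ)

/-- Assumption on test functions with finitely many Hölder singularities
(Assumption 4.1 of the paper). -/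
structure AssumptionH (γ : ℝ) (X : Finset ℝ) (h : ℝ → ℝ) : Prop where
  cont : Continuous h
  c2 : ∀ x ∉ (X : Set ℝ), ContDiffAt ℝ 2 h x
  sing : ∃ (U : ℝ → Set ℝ) (C : ℝ),
    (∀ a ∈ X, U a ∈ 𝓝 a) ∧
    ((X : Set ℝ).Pairwise fun a b => Disjoint (U a) (U b)) ∧
    ∀ a ∈ X, ∀ x ∈ U a \ {a}, ∀ k ≤ 2,
      |iteratedDeriv k (fun y => h y - h a) x| ≤ C * |x - a| ^ (γ - (k : ℝ))



/-! ### Auxiliary lemmas for Statement 17 -/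

noncomputable def fnorm {n : ℕ} (M : Mat n) : ℝ := Real.sqrt (∑ i, ∑ j, ‖M i j‖^2)

lemma fnorm_nonneg {n} (M : Mat n) : 0 ≤ fnorm M := Real.sqrt_nonneg _

lemma sq_fnorm {n} (M : Mat n) : fnorm M ^ 2 = ∑ i, ∑ j, ‖M i j‖^2 :=
  Real.sq_sqrt (by positivity)

lemma fnorm_smul {n} (t : ℝ) (M : Mat n) : fnorm (t • M) = |t| * fnorm M := by
  unfold fnorm
  rw [← Real.sqrt_sq (abs_nonneg t), ← Real.sqrt_mul (sq_nonneg _)]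
  congr 1
  rw [Finset.mul_sum]
  refine Finset.sum_congr rfl fun i _ => ?_
  rw [Finset.mul_sum]
  refine Finset.sum_congr rfl fun j _ => ?_
  rw [Matrix.smul_apply, norm_smul, Real.norm_eq_abs, mul_pow, sq_abs]

lemma norm_sq_re {z : ℂ} : ‖z‖^2 = (z * star z).re := by
  rw [Complex.star_def, Complex.mul_conj, Complex.ofReal_re, Complex.normSq_eq_norm_sq]

lemma sum_sq_eq_trace {n} (M : Mat n) : (∑ i, ∑ j, ‖M i j‖^2 : ℝ) = ((M * Mᴴ).trace).re := by
  rw [Matrix.trace]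
  simp only [Matrix.diag_apply, Matrix.mul_apply, Matrix.conjTranspose_apply, Complex.re_sum]
  exact Finset.sum_congr rfl fun i _ => Finset.sum_congr rfl fun j _ => norm_sq_re

lemma trace_conj_unitary {n} (M U V : Mat n) (hU : U * star U = 1) (hV : V * star V = 1) :
    ((star U * M * V) * (star U * M * V)ᴴ).trace = (M * Mᴴ).trace := by
  have cancelU : ∀ X : Mat n, U * (star U * X) = X := fun X => by
    rw [← mul_assoc, hU, one_mul]
  rw [← Matrix.star_eq_conjTranspose (star U * M * V), StarMul.star_mul, StarMul.star_mul, star_star,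
    ← Matrix.star_eq_conjTranspose M]
  calc ((star U * M * V) * (star V * (star M * U))).trace
      = ((star V * (star M * U)) * (star U * M * V)).trace := (Matrix.trace_mul_comm _ _)
    _ = (star V * (star M * (M * V))).trace := by
        simp only [mul_assoc]
        rw [show U * (star U * (M * V)) = M * V from cancelU _]
    _ = ((star M * (M * V)) * star V).trace := Matrix.trace_mul_comm _ _
    _ = (star M * M).trace := by
        simp only [mul_assoc]
        rw [hV, mul_one]
    _ = (M * star M).trace := Matrix.trace_mul_comm _ _

lemma trace_holder_aux {n : ℕ} (g : ℝ → ℝ) (L qq : ℝ) (hL : 0 ≤ L) (hq0 : 0 < qq) (hq1 : qq ≤ 1)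
    (hg : ∀ a b : ℝ, |g a - g b| ≤ L * |a - b| ^ qq)
    (A B U V : Mat n) (α β : Fin n → ℝ)
    (hU1 : U * star U = 1) (hU2 : star U * U = 1)
    (hV1 : V * star V = 1) (hV2 : star V * V = 1)
    (hAspec : A = U * Matrix.diagonal (RCLike.ofReal ∘ α) * star U)
    (hBspec : B = V * Matrix.diagonal (RCLike.ofReal ∘ β) * star V)
    (hFpos : 0 < fnorm (A - B)) :
    |∑ i, g (α i) - ∑ i, g (β i)| ≤ 2 * n * L * fnorm (A - B) ^ qq := by
  classical
  set F : ℝ := fnorm (A - B) with hFdef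
  set W : Mat n := star U * V with hWdef
  set p : Fin n → Fin n → ℝ := fun i j => ‖W i j‖^2 with hpdef
  have hp0 : ∀ i j, 0 ≤ p i j := fun i j => sq_nonneg _
  have cancelU : ∀ X : Mat n, U * (star U * X) = X := fun X => by
    rw [← mul_assoc, hU1, one_mul]
  have cancelV : ∀ X : Mat n, V * (star V * X) = X := fun X => by
    rw [← mul_assoc, hV1, one_mul]
  have hWW : W * star W = 1 := by
    rw [hWdef, StarMul.star_mul, star_star]
    calc star U * V * (star V * U) = star U * (V * (star V * U)) := by simp only [mul_assoc]
      _ = 1 := by rw [cancelV, hU2]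
  have hWW' : star W * W = 1 := by
    rw [hWdef, StarMul.star_mul, star_star]
    calc star V * U * (star U * V) = star V * (U * (star U * V)) := by simp only [mul_assoc]
      _ = 1 := by rw [cancelU, hV2]
  have hrow : ∀ i, ∑ j, p i j = 1 := by
    intro i
    have h1 : ((W * star W) i i) = 1 := by rw [hWW]; simp [Matrix.one_apply]
    have h2 : ∑ j, p i j = ((W * star W) i i).re := by
      rw [Matrix.mul_apply, Complex.re_sum]
      refine Finset.sum_congr rfl fun j _ => ?_
      exact norm_sq_re
    rw [h2, h1]; simp
  have hcol : ∀ j, ∑ i, p i j = 1 := by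
    intro j
    have h1 : ((star W * W) j j) = 1 := by rw [hWW']; simp [Matrix.one_apply]
    have h2 : ∑ i, p i j = ((star W * W) j j).re := by
      rw [Matrix.mul_apply, Complex.re_sum]
      refine Finset.sum_congr rfl fun i _ => ?_
      rw [mul_comm]
      exact norm_sq_re
    rw [h2, h1]; simp
  have hsump : ∑ i, ∑ j, p i j = n := by
    rw [Finset.sum_congr rfl fun i _ => hrow i]; simp
  have key1 : ∑ i, g (α i) - ∑ j, g (β j) = ∑ i, ∑ j, p i j * (g (α i) - g (β j)) := by
    have e1 : ∑ i, ∑ j, p i j * g (α i) = ∑ i, g (α i) := by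
      refine Finset.sum_congr rfl fun i _ => ?_
      rw [← Finset.sum_mul, hrow i, one_mul]
    have e2 : ∑ i, ∑ j, p i j * g (β j) = ∑ j, g (β j) := by
      rw [Finset.sum_comm]
      refine Finset.sum_congr rfl fun j _ => ?_
      rw [← Finset.sum_mul, hcol j, one_mul]
    simp only [mul_sub, Finset.sum_sub_distrib, e1, e2]
  have hCW : ∀ i j, (star U * (A - B) * V) i j = (RCLike.ofReal (α i - β j) : ℂ) * W i j := by
    have hA' : star U * A = Matrix.diagonal (RCLike.ofReal ∘ α) * star U := by
      rw [hAspec]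
      calc star U * (U * Matrix.diagonal (RCLike.ofReal ∘ α) * star U)
          = (star U * U) * (Matrix.diagonal (RCLike.ofReal ∘ α) * star U) := by
            simp only [mul_assoc]
        _ = Matrix.diagonal (RCLike.ofReal ∘ α) * star U := by rw [hU2, one_mul]
    have hB' : B * V = V * Matrix.diagonal (RCLike.ofReal ∘ β) := by
      rw [hBspec]
      calc V * Matrix.diagonal (RCLike.ofReal ∘ β) * star V * V
          = V * Matrix.diagonal (RCLike.ofReal ∘ β) * (star V * V) := by
            simp only [mul_assoc]
        _ = V * Matrix.diagonal (RCLike.ofReal ∘ β) := by rw [hV2, mul_one]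
    have hAB : star U * (A - B) * V
        = Matrix.diagonal (RCLike.ofReal ∘ α) * W - W * Matrix.diagonal (RCLike.ofReal ∘ β) := by
      rw [Matrix.mul_sub, Matrix.sub_mul]
      congr 1
      · rw [hA', mul_assoc, ← hWdef]
      · rw [mul_assoc, hB', ← mul_assoc, ← hWdef]
    intro i j
    rw [hAB, Matrix.sub_apply, Matrix.diagonal_mul, Matrix.mul_diagonal, Function.comp_apply,
      Function.comp_apply, RCLike.ofReal_sub, sub_mul]
    ring
  have key2 : ∑ i, ∑ j, p i j * (α i - β j)^2 = F ^ 2 := by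
    calc ∑ i, ∑ j, p i j * (α i - β j)^2
        = ∑ i, ∑ j, ‖(star U * (A - B) * V) i j‖^2 := by
          refine Finset.sum_congr rfl fun i _ => Finset.sum_congr rfl fun j _ => ?_
          rw [hCW i j, norm_mul, mul_pow, RCLike.norm_ofReal, sq_abs]
          simp only [hpdef]; ring
      _ = (((star U * (A - B) * V) * (star U * (A - B) * V)ᴴ).trace).re := sum_sq_eq_trace _
      _ = (((A - B) * (A - B)ᴴ).trace).re := by rw [trace_conj_unitary _ _ _ hU1 hV1]
      _ = ∑ i, ∑ j, ‖(A - B) i j‖^2 := (sum_sq_eq_trace _).symm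
      _ = F ^ 2 := (sq_fnorm _).symm
  have CS : ∑ i, ∑ j, p i j * |α i - β j| ≤ Real.sqrt n * F := by
    have h1 : ∑ z : Fin n × Fin n, p z.1 z.2 * |α z.1 - β z.2|
        ≤ Real.sqrt (∑ z : Fin n × Fin n, p z.1 z.2)
          * Real.sqrt (∑ z : Fin n × Fin n, p z.1 z.2 * (α z.1 - β z.2)^2) := by
      have h0 := Real.sum_mul_le_sqrt_mul_sqrt Finset.univ
        (fun z : Fin n × Fin n => Real.sqrt (p z.1 z.2))
        (fun z : Fin n × Fin n => Real.sqrt (p z.1 z.2) * |α z.1 - β z.2|)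
      refine le_trans (le_of_eq ?_) (h0.trans (le_of_eq ?_))
      · refine Finset.sum_congr rfl fun z _ => ?_
        rw [← mul_assoc, Real.mul_self_sqrt (hp0 _ _)]
      · congr 1
        · congr 1
          exact Finset.sum_congr rfl fun z _ => Real.sq_sqrt (hp0 _ _)
        · congr 1
          refine Finset.sum_congr rfl fun z _ => ?_
          rw [mul_pow, Real.sq_sqrt (hp0 _ _), sq_abs]
    rw [Fintype.sum_prod_type] at h1
    calc ∑ i, ∑ j, p i j * |α i - β j|
        ≤ Real.sqrt (∑ i, ∑ j, p i j) * Real.sqrt (∑ i, ∑ j, p i j * (α i - β j)^2) := by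
          simpa [Fintype.sum_prod_type] using h1
      _ = Real.sqrt n * F := by rw [hsump, key2, Real.sqrt_sq hFpos.le]
  have rpow_bd : ∀ i j, |α i - β j| ^ qq ≤ F ^ qq + F ^ (qq - 1) * |α i - β j| := by
    intro i j
    rcases le_or_gt (|α i - β j|) F with h | h
    · refine le_trans (Real.rpow_le_rpow (abs_nonneg _) h hq0.le) ?_
      nlinarith [mul_nonneg (Real.rpow_nonneg hFpos.le (qq - 1)) (abs_nonneg (α i - β j))]
    · have habs : (0:ℝ) < |α i - β j| := lt_of_le_of_lt hFpos.le h
      have he : |α i - β j| ^ qq = |α i - β j| ^ (qq - 1) * |α i - β j| := by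
        rw [← Real.rpow_add_one habs.ne' (qq - 1)]; ring_nf
      rw [he]
      have h2 : |α i - β j| ^ (qq - 1) ≤ F ^ (qq - 1) :=
        Real.rpow_le_rpow_of_nonpos hFpos h.le (by linarith)
      nlinarith [Real.rpow_nonneg hFpos.le qq,
        mul_le_mul_of_nonneg_right h2 (abs_nonneg (α i - β j))]
  have main : |∑ i, g (α i) - ∑ j, g (β j)|
      ≤ L * (F ^ qq * (∑ i, ∑ j, p i j) + F ^ (qq - 1) * ∑ i, ∑ j, p i j * |α i - β j|) := by
    rw [key1]
    refine le_trans (Finset.abs_sum_le_sum_abs _ _) ?_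
    have step : ∀ i, |∑ j, p i j * (g (α i) - g (β j))|
        ≤ ∑ j, (L * F ^ qq * p i j + L * F ^ (qq - 1) * (p i j * |α i - β j|)) := by
      intro i
      refine le_trans (Finset.abs_sum_le_sum_abs _ _) (Finset.sum_le_sum fun j _ => ?_)
      rw [abs_mul, abs_of_nonneg (hp0 i j)]
      calc p i j * |g (α i) - g (β j)| ≤ p i j * (L * |α i - β j| ^ qq) :=
            mul_le_mul_of_nonneg_left (hg _ _) (hp0 i j)
        _ ≤ p i j * (L * (F ^ qq + F ^ (qq - 1) * |α i - β j|)) :=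
            mul_le_mul_of_nonneg_left
              (mul_le_mul_of_nonneg_left (rpow_bd i j) hL) (hp0 i j)
        _ = L * F ^ qq * p i j + L * F ^ (qq - 1) * (p i j * |α i - β j|) := by ring
    refine le_trans (Finset.sum_le_sum fun i _ => step i) (le_of_eq ?_)
    simp only [Finset.sum_add_distrib, ← Finset.mul_sum]
    ring
  calc |∑ i, g (α i) - ∑ i, g (β i)|
      ≤ L * (F ^ qq * (∑ i, ∑ j, p i j) + F ^ (qq - 1) * ∑ i, ∑ j, p i j * |α i - β j|) := main
    _ ≤ L * (F ^ qq * n + F ^ (qq - 1) * (Real.sqrt n * F)) := by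
        refine mul_le_mul_of_nonneg_left (add_le_add ?_ ?_) hL
        · rw [hsump]
        · exact mul_le_mul_of_nonneg_left CS (Real.rpow_nonneg hFpos.le _)
    _ = L * (F ^ qq * n + Real.sqrt n * F ^ qq) := by
        rw [show F ^ (qq - 1) * (Real.sqrt n * F) = Real.sqrt n * (F ^ (qq - 1) * F) by ring,
          ← Real.rpow_add_one hFpos.ne' (qq - 1)]
        ring_nf
    _ ≤ 2 * n * L * F ^ qq := by
        have hsq : Real.sqrt n ≤ (n : ℝ) := by
          rw [show ((n:ℝ)) = Real.sqrt ((n:ℝ)^2) from (Real.sqrt_sq (Nat.cast_nonneg n)).symm]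
          refine Real.sqrt_le_sqrt ?_
          have : (n : ℝ) ≤ (n:ℝ)^2 := by
            have := Nat.le_self_pow (two_ne_zero) n
            exact_mod_cast this
          simpa using this
        nlinarith [Real.rpow_nonneg hFpos.le qq, mul_le_mul_of_nonneg_right hsq
          (mul_nonneg hL (Real.rpow_nonneg hFpos.le qq)), Nat.cast_nonneg (α := ℝ) n]

lemma trace_holder {n : ℕ} (g : ℝ → ℝ) (L qq : ℝ) (hL : 0 ≤ L) (hq0 : 0 < qq) (hq1 : qq ≤ 1)
    (hg : ∀ a b : ℝ, |g a - g b| ≤ L * |a - b| ^ qq)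
    (A B : Mat n) (hA : A.IsHermitian) (hB : B.IsHermitian) :
    |∑ i, g (hA.eigenvalues i) - ∑ i, g (hB.eigenvalues i)| ≤
      2 * n * L * fnorm (A - B) ^ qq := by
  classical
  rcases eq_or_ne (A - B) 0 with hAB0 | hAB0
  · obtain rfl : A = B := sub_eq_zero.mp hAB0
    rw [Subsingleton.elim hB hA, sub_self, abs_zero]
    exact mul_nonneg (mul_nonneg (by positivity) hL) (Real.rpow_nonneg (fnorm_nonneg _) _)
  have hFpos : 0 < fnorm (A - B) := by
    rcases (fnorm_nonneg (A - B)).lt_or_eq with h | h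
    · exact h
    · exfalso; apply hAB0
      have h2 : ∑ i, ∑ j, ‖(A - B) i j‖^2 = 0 := by rw [← sq_fnorm, ← h]; ring
      ext i j
      have hii := (Finset.sum_eq_zero_iff_of_nonneg
        (fun i _ => Finset.sum_nonneg fun j _ => sq_nonneg _)).mp h2 i (Finset.mem_univ i)
      have hij := (Finset.sum_eq_zero_iff_of_nonneg (fun j _ => sq_nonneg _)).mp hii j
        (Finset.mem_univ j)
      have hn : ‖(A - B) i j‖ = 0 := by
        have := sq_eq_zero_iff.mp hij
        simpa using this
      simpa using norm_eq_zero.mp hn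
  refine trace_holder_aux g L qq hL hq0 hq1 hg A B
    (hA.eigenvectorUnitary : Mat n) (hB.eigenvectorUnitary : Mat n)
    hA.eigenvalues hB.eigenvalues
    (Matrix.mem_unitaryGroup_iff.mp hA.eigenvectorUnitary.2)
    (Matrix.mem_unitaryGroup_iff'.mp hA.eigenvectorUnitary.2)
    (Matrix.mem_unitaryGroup_iff.mp hB.eigenvectorUnitary.2)
    (Matrix.mem_unitaryGroup_iff'.mp hB.eigenvectorUnitary.2)
    ?_ ?_ hFpos
  · exact hA.spectral_theorem
  · exact hB.spectral_theorem


lemma trace_cfc {n : ℕ} (g : ℝ → ℝ) (M : Mat n) (hM : M.IsHermitian) :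
    (cfc g M).trace = ((∑ i, g (hM.eigenvalues i) : ℝ) : ℂ) := by
  rw [hM.cfc_eq, Matrix.IsHermitian.cfc, Unitary.conjStarAlgAut_apply, Matrix.trace_mul_cycle]
  rw [Matrix.mem_unitaryGroup_iff'.mp (hM.eigenvectorUnitary).2]
  rw [one_mul, Matrix.trace_diagonal]
  push_cast
  rfl

section scalar
variable {γ x₀ R q : ℝ} {g : ℝ → ℝ}

lemma mem_half (hR : 0 < R) : (x₀ + R/2) ∈ Set.Ioo (x₀ - R) (x₀ + R) \ {x₀} := by
  constructor
  · constructor <;> [linarith; linarith]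
  · simp only [Set.mem_singleton_iff]; intro h; linarith

lemma hsNorm_pt (hγ0 : 0 < γ) (hR : 0 < R) (hg : AssumptionHS γ x₀ R g) :
    0 ≤ hsNorm γ x₀ R g 2 ∧
    ∀ k : ℕ, k ≤ 2 → ∀ x ∈ Set.Ioo (x₀ - R) (x₀ + R) \ {x₀},
      |iteratedDeriv k g x| ≤ hsNorm γ x₀ R g 2 * |x - x₀| ^ (γ - (k:ℝ)) := by
  obtain ⟨C, hC⟩ := hg.bdd
  set D := max C 0 with hD
  have hD0 : 0 ≤ D := le_max_right _ _
  set F : {k : ℕ // k ≤ 2} → {x : ℝ // x ∈ Set.Ioo (x₀ - R) (x₀ + R) \ {x₀}} → ℝ :=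
    fun k x => |iteratedDeriv (k : ℕ) g (x : ℝ)| * |(x : ℝ) - x₀| ^ (((k : ℕ) : ℝ) - γ)
    with hF
  have hxpos : ∀ x : {x : ℝ // x ∈ Set.Ioo (x₀ - R) (x₀ + R) \ {x₀}}, 0 < |(x:ℝ) - x₀| := by
    intro x
    have := x.2.2
    simp only [Set.mem_singleton_iff] at this
    rw [abs_pos, sub_ne_zero]
    exact this
  have hFb : ∀ k x, F k x ≤ D := by
    intro k x
    have h1 : |iteratedDeriv (k : ℕ) g (x : ℝ)| ≤ C * |(x:ℝ) - x₀| ^ (γ - ((k:ℕ):ℝ)) :=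
      hC k k.2 x x.2
    calc F k x ≤ (C * |(x:ℝ) - x₀| ^ (γ - ((k:ℕ):ℝ))) * |(x : ℝ) - x₀| ^ (((k : ℕ) : ℝ) - γ) :=
          mul_le_mul_of_nonneg_right h1 (Real.rpow_nonneg (abs_nonneg _) _)
      _ = C := by
          rw [mul_assoc, ← Real.rpow_add (hxpos x)]
          simp
      _ ≤ D := le_max_left _ _
  haveI : Nonempty {x : ℝ // x ∈ Set.Ioo (x₀ - R) (x₀ + R) \ {x₀}} := ⟨⟨_, mem_half hR⟩⟩
  haveI : Nonempty {k : ℕ // k ≤ 2} := ⟨⟨0, by norm_num⟩⟩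
  have hbin : ∀ k, BddAbove (Set.range (F k)) := fun k => ⟨D, by rintro y ⟨x, rfl⟩; exact hFb k x⟩
  have hbout : BddAbove (Set.range fun k => ⨆ x, F k x) := by
    refine ⟨D, ?_⟩
    rintro y ⟨k, rfl⟩
    exact ciSup_le fun x => hFb k x
  have hpt : ∀ (k : {k : ℕ // k ≤ 2}) x, F k x ≤ hsNorm γ x₀ R g 2 := by
    intro k x
    have h1 : F k x ≤ ⨆ x, F k x := le_ciSup (hbin k) x
    have h2 : (⨆ x, F k x) ≤ hsNorm γ x₀ R g 2 := le_ciSup hbout k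
    exact h1.trans h2
  constructor
  · have := hpt ⟨0, by norm_num⟩ ⟨_, mem_half hR⟩
    refine le_trans ?_ this
    exact mul_nonneg (abs_nonneg _) (Real.rpow_nonneg (abs_nonneg _) _)
  · intro k hk x hx
    have h1 := hpt ⟨k, hk⟩ ⟨x, hx⟩
    have hxp : 0 < |x - x₀| := hxpos ⟨x, hx⟩
    have h2 : |iteratedDeriv k g x|
        = (|iteratedDeriv k g x| * |x - x₀| ^ ((k:ℝ) - γ)) * |x - x₀| ^ (γ - (k:ℝ)) := by
      rw [mul_assoc, ← Real.rpow_add hxp]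
      simp
    rw [h2]
    exact mul_le_mul_of_nonneg_right h1 (Real.rpow_nonneg (abs_nonneg _) _)

end scalar

section scalar2
variable {γ x₀ R q : ℝ} {g : ℝ → ℝ}

lemma g_zero_outside (hg : AssumptionHS γ x₀ R g) {x : ℝ}
    (hx : x ∉ Set.Ioo (x₀ - R) (x₀ + R)) : g x = 0 := by
  by_contra h
  exact hx (hg.supp (subset_tsupport g h))

lemma deriv_zero_outside (hg : AssumptionHS γ x₀ R g) {x : ℝ}
    (hx : x ∉ Set.Ioo (x₀ - R) (x₀ + R)) : deriv g x = 0 := by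
  have hx' : x ∉ tsupport g := fun h => hx (hg.supp h)
  have hev : g =ᶠ[𝓝 x] (fun _ => (0:ℝ)) := by
    refine Filter.eventuallyEq_of_mem
      ((isClosed_tsupport g).isOpen_compl.mem_nhds hx') (fun y hy => ?_)
    exact image_eq_zero_of_notMem_tsupport hy
  rw [hev.deriv_eq, deriv_const]

lemma g_diffAt (hg : AssumptionHS γ x₀ R g) {x : ℝ} (hx : x ≠ x₀) :
    DifferentiableAt ℝ g x := by
  by_cases h : x ∈ Set.Ioo (x₀ - R) (x₀ + R)
  · exact (hg.c2 x ⟨h, by simpa using hx⟩).differentiableAt (by norm_num)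
  · have hx' : x ∉ tsupport g := fun hh => h (hg.supp hh)
    have hev : g =ᶠ[𝓝 x] (fun _ => (0:ℝ)) := by
      refine Filter.eventuallyEq_of_mem
        ((isClosed_tsupport g).isOpen_compl.mem_nhds hx') (fun y hy => ?_)
      exact image_eq_zero_of_notMem_tsupport hy
    exact (differentiableAt_const (0:ℝ)).congr_of_eventuallyEq hev

lemma g_at_x0 (hγ0 : 0 < γ) (hR : 0 < R) (hg : AssumptionHS γ x₀ R g) : g x₀ = 0 := by
  set G := hsNorm γ x₀ R g 2
  obtain ⟨hG0, hpt⟩ := hsNorm_pt hγ0 hR hg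
  have hb : ∀ᶠ x in 𝓝[≠] x₀, |g x| ≤ G * |x - x₀| ^ γ := by
    have hIoo : Set.Ioo (x₀ - R) (x₀ + R) ∈ 𝓝 x₀ :=
      Ioo_mem_nhds (by linarith) (by linarith)
    filter_upwards [nhdsWithin_le_nhds hIoo, self_mem_nhdsWithin] with x hx hx'
    have := hpt 0 (by norm_num) x ⟨hx, by simpa using hx'⟩
    simpa using this
  have h2 : Tendsto (fun x => G * |x - x₀| ^ γ) (𝓝[≠] x₀) (𝓝 0) := by
    have hc : Tendsto (fun x : ℝ => |x - x₀|) (𝓝 x₀) (𝓝 0) := by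
      have h0 : Tendsto (fun x : ℝ => x - x₀) (𝓝 x₀) (𝓝 (x₀ - x₀)) :=
        (tendsto_id.sub_const x₀)
      rw [sub_self] at h0
      simpa using h0.abs
    have hrp : Tendsto (fun x : ℝ => |x - x₀| ^ γ) (𝓝 x₀) (𝓝 0) := by
      have hcont : ContinuousAt (fun t : ℝ => t ^ γ) 0 :=
        Real.continuousAt_rpow_const 0 γ (Or.inr hγ0.le)
      have := hcont.tendsto.comp hc
      simpa [Function.comp_def, Real.zero_rpow hγ0.ne'] using this
    have := hrp.const_mul G
    simpa using (this.mono_left nhdsWithin_le_nhds)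
  have h3 : Tendsto g (𝓝[≠] x₀) (𝓝 0) := squeeze_zero_norm' hb h2
  have h4 : Tendsto g (𝓝[≠] x₀) (𝓝 (g x₀)) :=
    (hg.cont.continuousAt).tendsto.mono_left nhdsWithin_le_nhds
  exact tendsto_nhds_unique h4 h3

lemma g_abs_bound (hγ0 : 0 < γ) (hR : 0 < R) (hg : AssumptionHS γ x₀ R g)
    (hq0 : 0 < q) (hqγ : q < γ) (x : ℝ) :
    |g x| ≤ hsNorm γ x₀ R g 2 * R ^ (γ - q) * |x - x₀| ^ q := by
  set G := hsNorm γ x₀ R g 2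
  obtain ⟨hG0, hpt⟩ := hsNorm_pt hγ0 hR hg
  have hRq : 0 ≤ R ^ (γ - q) := Real.rpow_nonneg hR.le _
  by_cases hx0 : x = x₀
  · subst hx0
    rw [g_at_x0 hγ0 hR hg]
    simp [Real.zero_rpow hq0.ne']
  by_cases hx : x ∈ Set.Ioo (x₀ - R) (x₀ + R)
  · have h1 := hpt 0 (by norm_num) x ⟨hx, by simpa using hx0⟩
    simp only [iteratedDeriv_zero, Nat.cast_zero, sub_zero] at h1
    have hxp : 0 < |x - x₀| := by rw [abs_pos, sub_ne_zero]; exact hx0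
    have hxR : |x - x₀| ≤ R := by
      rw [abs_le]
      constructor <;> [linarith [hx.1]; linarith [hx.2]]
    calc |g x| ≤ G * |x - x₀| ^ γ := by simpa using h1
      _ = G * (|x - x₀| ^ (γ - q) * |x - x₀| ^ q) := by
          rw [← Real.rpow_add hxp]; ring_nf
      _ ≤ G * (R ^ (γ - q) * |x - x₀| ^ q) := by
          refine mul_le_mul_of_nonneg_left ?_ hG0
          exact mul_le_mul_of_nonneg_right
            (Real.rpow_le_rpow hxp.le hxR (by linarith)) (Real.rpow_nonneg (abs_nonneg _) _)
      _ = G * R ^ (γ - q) * |x - x₀| ^ q := by ring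
  · rw [g_zero_outside hg hx]
    simp only [abs_zero]
    exact mul_nonneg (mul_nonneg hG0 hRq) (Real.rpow_nonneg (abs_nonneg _) _)

lemma g_deriv_bound (hγ0 : 0 < γ) (hγ1 : γ ≤ 1) (hR : 0 < R) (hg : AssumptionHS γ x₀ R g)
    (hq0 : 0 < q) (hqγ : q < γ) {x : ℝ} (hx0 : x ≠ x₀) :
    |deriv g x| ≤ hsNorm γ x₀ R g 2 * R ^ (γ - q) * |x - x₀| ^ (q - 1) := by
  set G := hsNorm γ x₀ R g 2
  obtain ⟨hG0, hpt⟩ := hsNorm_pt hγ0 hR hg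
  have hRq : 0 ≤ R ^ (γ - q) := Real.rpow_nonneg hR.le _
  have hxp : 0 < |x - x₀| := by rw [abs_pos, sub_ne_zero]; exact hx0
  by_cases hx : x ∈ Set.Ioo (x₀ - R) (x₀ + R)
  · have h1 := hpt 1 (by norm_num) x ⟨hx, by simpa using hx0⟩
    rw [iteratedDeriv_one] at h1
    have hxR : |x - x₀| ≤ R := by
      rw [abs_le]
      constructor <;> [linarith [hx.1]; linarith [hx.2]]
    calc |deriv g x| ≤ G * |x - x₀| ^ (γ - (1:ℝ)) := by simpa using h1
      _ = G * (|x - x₀| ^ (γ - q) * |x - x₀| ^ (q - 1)) := by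
          rw [← Real.rpow_add hxp]; ring_nf
      _ ≤ G * (R ^ (γ - q) * |x - x₀| ^ (q - 1)) := by
          refine mul_le_mul_of_nonneg_left ?_ hG0
          exact mul_le_mul_of_nonneg_right
            (Real.rpow_le_rpow hxp.le hxR (by linarith)) (Real.rpow_nonneg (abs_nonneg _) _)
      _ = G * R ^ (γ - q) * |x - x₀| ^ (q - 1) := by ring
  · rw [deriv_zero_outside hg hx]
    simp only [abs_zero]
    exact mul_nonneg (mul_nonneg hG0 hRq) (Real.rpow_nonneg (abs_nonneg _) _)

lemma g_holder (hγ0 : 0 < γ) (hγ1 : γ ≤ 1) (hR : 0 < R) (hg : AssumptionHS γ x₀ R g)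
    (hq0 : 0 < q) (hqγ : q < γ) (hq1 : q ≤ 1) (a b : ℝ) :
    |g a - g b| ≤ 4 * (hsNorm γ x₀ R g 2 * R ^ (γ - q)) * |a - b| ^ q := by
  set G := hsNorm γ x₀ R g 2
  obtain ⟨hG0, hpt⟩ := hsNorm_pt hγ0 hR hg
  have hRq : 0 ≤ R ^ (γ - q) := Real.rpow_nonneg hR.le _
  have hGR : 0 ≤ G * R ^ (γ - q) := mul_nonneg hG0 hRq
  rcases eq_or_ne a b with rfl | hab
  · simp only [sub_self, abs_zero]
    exact mul_nonneg (mul_nonneg (by norm_num) hGR) (Real.rpow_nonneg le_rfl _)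
  have habp : 0 < |a - b| := by rw [abs_pos, sub_ne_zero]; exact hab
  set s : ℝ := max |a - x₀| |b - x₀| with hs
  rcases lt_or_ge (s/2) |a - b| with h2 | h1
  -- far case
  · have ha' : |a - x₀| ^ q ≤ 2 * |a - b| ^ q := by
      have h3 : |a - x₀| ≤ 2 * |a - b| := by
        have : |a - x₀| ≤ s := le_max_left _ _
        linarith
      calc |a - x₀| ^ q ≤ (2 * |a - b|) ^ q :=
            Real.rpow_le_rpow (abs_nonneg _) h3 hq0.le
        _ = 2 ^ q * |a - b| ^ q := Real.mul_rpow (by norm_num) (abs_nonneg _)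
        _ ≤ 2 * |a - b| ^ q := by
            refine mul_le_mul_of_nonneg_right ?_ (Real.rpow_nonneg (abs_nonneg _) _)
            calc (2:ℝ) ^ q ≤ 2 ^ (1:ℝ) :=
                  Real.rpow_le_rpow_of_exponent_le (by norm_num) hq1
              _ = 2 := by norm_num
    have hb' : |b - x₀| ^ q ≤ 2 * |a - b| ^ q := by
      have h3 : |b - x₀| ≤ 2 * |a - b| := by
        have : |b - x₀| ≤ s := le_max_right _ _
        linarith
      calc |b - x₀| ^ q ≤ (2 * |a - b|) ^ q :=
            Real.rpow_le_rpow (abs_nonneg _) h3 hq0.le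
        _ = 2 ^ q * |a - b| ^ q := Real.mul_rpow (by norm_num) (abs_nonneg _)
        _ ≤ 2 * |a - b| ^ q := by
            refine mul_le_mul_of_nonneg_right ?_ (Real.rpow_nonneg (abs_nonneg _) _)
            calc (2:ℝ) ^ q ≤ 2 ^ (1:ℝ) :=
                  Real.rpow_le_rpow_of_exponent_le (by norm_num) hq1
              _ = 2 := by norm_num
    calc |g a - g b| ≤ |g a| + |g b| := abs_sub _ _
      _ ≤ G * R ^ (γ - q) * |a - x₀| ^ q + G * R ^ (γ - q) * |b - x₀| ^ q :=
          add_le_add (g_abs_bound hγ0 hR hg hq0 hqγ a) (g_abs_bound hγ0 hR hg hq0 hqγ b)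
      _ ≤ G * R ^ (γ - q) * (2 * |a - b| ^ q) + G * R ^ (γ - q) * (2 * |a - b| ^ q) :=
          add_le_add (mul_le_mul_of_nonneg_left ha' hGR) (mul_le_mul_of_nonneg_left hb' hGR)
      _ = 4 * (G * R ^ (γ - q)) * |a - b| ^ q := by ring
  -- near case : use MVT
  · have hsab : |a - b| ≤ s / 2 := h1
    have hspos : 0 < s := by
      have : 0 < s / 2 := lt_of_lt_of_le habp hsab
      linarith
    have hseg : ∀ y ∈ Set.uIcc a b, |a - b| ≤ |y - x₀| := by
      intro y hy
      have hya : |y - a| ≤ |a - b| := by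
        rcases le_total a b with hle | hle
        · rw [Set.uIcc_of_le hle] at hy
          rw [abs_sub_comm a b, abs_of_nonneg (by linarith : (0:ℝ) ≤ b - a)]
          rw [abs_le]
          constructor <;> linarith [hy.1, hy.2]
        · rw [Set.uIcc_of_ge hle] at hy
          rw [abs_of_nonneg (by linarith : (0:ℝ) ≤ a - b), abs_le]
          constructor <;> linarith [hy.1, hy.2]
      have hyb : |y - b| ≤ |a - b| := by
        rcases le_total a b with hle | hle
        · rw [Set.uIcc_of_le hle] at hy
          rw [abs_sub_comm a b, abs_of_nonneg (by linarith : (0:ℝ) ≤ b - a), abs_le]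
          constructor <;> linarith [hy.1, hy.2]
        · rw [Set.uIcc_of_ge hle] at hy
          rw [abs_of_nonneg (by linarith : (0:ℝ) ≤ a - b), abs_le]
          constructor <;> linarith [hy.1, hy.2]
      have key : ∀ c : ℝ, s = |c - x₀| → |y - c| ≤ |a - b| → |a - b| ≤ |y - x₀| := by
        intro c hc hyc
        have h5 := abs_sub_abs_le_abs_sub (c - x₀) (c - y)
        have h6 : c - x₀ - (c - y) = y - x₀ := by ring
        rw [h6, abs_sub_comm c y, ← hc] at h5
        linarith
      rcases max_cases |a - x₀| |b - x₀| with ⟨he, _⟩ | ⟨he, _⟩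
      · exact key a he hya
      · exact key b he hyb
    have hyne : ∀ y ∈ Set.uIcc a b, y ≠ x₀ := by
      intro y hy hyx
      have := hseg y hy
      rw [hyx] at this
      simp at this
      exact hab (sub_eq_zero.mp this)
    set M : ℝ := G * R ^ (γ - q) * |a - b| ^ (q - 1) with hM
    have hbound : ∀ y ∈ Set.uIcc a b, ‖deriv g y‖ ≤ M := by
      intro y hy
      rw [Real.norm_eq_abs]
      refine le_trans (g_deriv_bound hγ0 hγ1 hR hg hq0 hqγ (hyne y hy)) ?_
      refine mul_le_mul_of_nonneg_left ?_ hGR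
      exact Real.rpow_le_rpow_of_nonpos habp (hseg y hy) (by linarith)
    have hdiff : ∀ y ∈ Set.uIcc a b, DifferentiableAt ℝ g y :=
      fun y hy => g_diffAt hg (hyne y hy)
    have hmvt := Convex.norm_image_sub_le_of_norm_deriv_le hdiff hbound
      (convex_uIcc a b) (Set.right_mem_uIcc) (Set.left_mem_uIcc)
    rw [Real.norm_eq_abs, Real.norm_eq_abs] at hmvt
    calc |g a - g b| ≤ M * |a - b| := hmvt
      _ = G * R ^ (γ - q) * (|a - b| ^ (q - 1) * |a - b|) := by ring
      _ = G * R ^ (γ - q) * |a - b| ^ q := by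
          rw [← Real.rpow_add_one habp.ne' (q - 1)]; ring_nf
      _ ≤ 4 * (G * R ^ (γ - q)) * |a - b| ^ q := by
          have h9 : 0 ≤ (G * R ^ (γ - q)) * |a - b| ^ q :=
            mul_nonneg hGR (Real.rpow_nonneg (abs_nonneg _) _)
          nlinarith [h9]

end scalar2


lemma fnorm_neg {n} (M : Mat n) : fnorm (-M) = fnorm M := by
  unfold fnorm
  congr 1
  refine Finset.sum_congr rfl fun i _ => Finset.sum_congr rfl fun j _ => ?_
  rw [Matrix.neg_apply, norm_neg]

lemma herm_comb {n} (t : ℝ) {B₁ B₂ : Mat n} (h₁ : B₁.IsHermitian) (h₂ : B₂.IsHermitian) :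
    (t • B₁ + (1 - t) • B₂).IsHermitian := by
  rw [Matrix.IsHermitian, Matrix.conjTranspose_add, Matrix.conjTranspose_smul,
    Matrix.conjTranspose_smul, h₁, h₂]
  norm_num

set_option maxHeartbeats 1000000 in
lemma frakU_bound {n : ℕ} (g : ℝ → ℝ) (L qq : ℝ) (hL : 0 ≤ L) (hq0 : 0 < qq) (hq1 : qq ≤ 1)
    (hg : ∀ a b : ℝ, |g a - g b| ≤ L * |a - b| ^ qq)
    (B₁ B₂ : Mat n) (h₁ : B₁.IsHermitian) (h₂ : B₂.IsHermitian) (K : ℝ)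
    (hK : fnorm (B₁ - B₂) ≤ K) :
    ‖frakU (fun M => cfc g M) B₁ B₂‖ ≤
      (8 * n * L * K ^ qq) * ∫ t in (0:ℝ)..1, (t ^ (qq - 1) + (1 - t) ^ (qq - 1)) := by
  have hK0 : 0 ≤ K := (fnorm_nonneg _).trans hK
  have hKq : fnorm (B₁ - B₂) ^ qq ≤ K ^ qq := Real.rpow_le_rpow (fnorm_nonneg _) hK hq0.le
  have hc0 : (0:ℝ) ≤ 2 * n * L * K ^ qq := by
    have : 0 ≤ fnorm (B₁ - B₂) ^ qq := Real.rpow_nonneg (fnorm_nonneg _) _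
    have h8 : (0:ℝ) ≤ 2 * n := by positivity
    have := Real.rpow_nonneg hK0 qq
    positivity
  -- the real numerator
  set S : ∀ (A : Mat n), A.IsHermitian → ℝ := fun A hA => ∑ i, g (hA.eigenvalues i) with hSdef
  -- pointwise bound on the open interval
  have key : ∀ t ∈ Set.Ioc (0:ℝ) 1,
      ‖((cfc g (t • B₁ + (1 - t) • B₂)).trace - t • (cfc g B₁).trace
          - (1 - t) • (cfc g B₂).trace) / ((t * (1 - t) : ℝ) : ℂ)‖
        ≤ (8 * n * L * K ^ qq) * (t ^ (qq - 1) + (1 - t) ^ (qq - 1)) := by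
    intro t ht
    have ht0 : 0 < t := ht.1
    have ht1 : t ≤ 1 := ht.2
    have hMt : (t • B₁ + (1 - t) • B₂).IsHermitian := herm_comb t h₁ h₂
    have hnum : (cfc g (t • B₁ + (1 - t) • B₂)).trace - t • (cfc g B₁).trace
        - (1 - t) • (cfc g B₂).trace
        = (((∑ i, g (hMt.eigenvalues i)) - t * (∑ i, g (h₁.eigenvalues i))
            - (1 - t) * (∑ i, g (h₂.eigenvalues i)) : ℝ) : ℂ) := by
      rw [trace_cfc g _ hMt, trace_cfc g _ h₁, trace_cfc g _ h₂]
      simp only [Complex.real_smul]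
      push_cast
      ring
    rcases eq_or_lt_of_le ht1 with rfl | ht1'
    · norm_num
      positivity
    set SM := ∑ i, g (hMt.eigenvalues i) with hSM
    set S1 := ∑ i, g (h₁.eigenvalues i) with hS1
    set S2 := ∑ i, g (h₂.eigenvalues i) with hS2
    have hd1 : |SM - S2| ≤ 2 * n * L * K ^ qq * t ^ qq := by
      rw [hSM, hS2]
      have hdiff : (t • B₁ + (1 - t) • B₂) - B₂ = t • (B₁ - B₂) := by module
      have h5 := trace_holder g L qq hL hq0 hq1 hg _ _ hMt h₂
      rw [hdiff, fnorm_smul, abs_of_nonneg ht0.le,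
        Real.mul_rpow ht0.le (fnorm_nonneg _)] at h5
      refine h5.trans ?_
      calc 2 * (n:ℝ) * L * (t ^ qq * fnorm (B₁ - B₂) ^ qq)
          ≤ 2 * n * L * (t ^ qq * K ^ qq) := by
            refine mul_le_mul_of_nonneg_left ?_ (by positivity)
            exact mul_le_mul_of_nonneg_left hKq (Real.rpow_nonneg ht0.le _)
        _ = 2 * n * L * K ^ qq * t ^ qq := by ring
    have hd2 : |SM - S1| ≤ 2 * n * L * K ^ qq * (1 - t) ^ qq := by
      rw [hSM, hS1]
      have hdiff : (t • B₁ + (1 - t) • B₂) - B₁ = (1 - t) • (B₂ - B₁) := by module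
      have h5 := trace_holder g L qq hL hq0 hq1 hg _ _ hMt h₁
      have hBB : fnorm (B₂ - B₁) = fnorm (B₁ - B₂) := by
        rw [show B₂ - B₁ = -(B₁ - B₂) by abel, fnorm_neg]
      rw [hdiff, fnorm_smul, abs_of_nonneg (by linarith : (0:ℝ) ≤ 1 - t), hBB,
        Real.mul_rpow (by linarith) (fnorm_nonneg _)] at h5
      refine h5.trans ?_
      calc 2 * (n:ℝ) * L * ((1 - t) ^ qq * fnorm (B₁ - B₂) ^ qq)
          ≤ 2 * n * L * ((1 - t) ^ qq * K ^ qq) := by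
            refine mul_le_mul_of_nonneg_left ?_ (by positivity)
            exact mul_le_mul_of_nonneg_left hKq (Real.rpow_nonneg (by linarith) _)
        _ = 2 * n * L * K ^ qq * (1 - t) ^ qq := by ring
    have hd3 : |S1 - S2| ≤ 2 * n * L * K ^ qq := by
      rw [hS1, hS2]
      have h5 := trace_holder g L qq hL hq0 hq1 hg _ _ h₁ h₂
      exact h5.trans (mul_le_mul_of_nonneg_left hKq (by positivity))
    have hle_t : t ≤ t ^ qq := by
      calc t = t ^ (1:ℝ) := (Real.rpow_one t).symm
        _ ≤ t ^ qq := Real.rpow_le_rpow_of_exponent_ge ht0 ht1 hq1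
    have hle_s : 1 - t ≤ (1 - t) ^ qq := by
      calc 1 - t = (1 - t) ^ (1:ℝ) := (Real.rpow_one _).symm
        _ ≤ (1 - t) ^ qq := Real.rpow_le_rpow_of_exponent_ge (by linarith) (by linarith) hq1
    have est1 : |SM - t * S1 - (1 - t) * S2| ≤ 4 * n * L * K ^ qq * t ^ qq := by
      have e : SM - t * S1 - (1 - t) * S2 = (SM - S2) - t * (S1 - S2) := by ring
      rw [e]
      have tri : |(SM - S2) - t * (S1 - S2)| ≤ |SM - S2| + |t * (S1 - S2)| := abs_sub _ _
      rw [abs_mul, abs_of_nonneg ht0.le] at tri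
      have h6 : t * |S1 - S2| ≤ t ^ qq * (2 * n * L * K ^ qq) :=
        mul_le_mul hle_t hd3 (abs_nonneg _) (Real.rpow_nonneg ht0.le _)
      nlinarith [tri, hd1, h6]
    have est2 : |SM - t * S1 - (1 - t) * S2| ≤ 4 * n * L * K ^ qq * (1 - t) ^ qq := by
      have e : SM - t * S1 - (1 - t) * S2 = (SM - S1) + (1 - t) * (S1 - S2) := by ring
      rw [e]
      have tri : |(SM - S1) + (1 - t) * (S1 - S2)| ≤ |SM - S1| + |(1 - t) * (S1 - S2)| :=
        abs_add_le _ _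
      rw [abs_mul, abs_of_nonneg (by linarith : (0:ℝ) ≤ 1 - t)] at tri
      have h6 : (1 - t) * |S1 - S2| ≤ (1 - t) ^ qq * (2 * n * L * K ^ qq) :=
        mul_le_mul hle_s hd3 (abs_nonneg _) (Real.rpow_nonneg (by linarith) _)
      nlinarith [tri, hd2, h6]
    have hdpos : 0 < t * (1 - t) := mul_pos ht0 (by linarith)
    rw [hnum, norm_div]
    have hden : ‖((t * (1 - t) : ℝ) : ℂ)‖ = t * (1 - t) := by
      rw [Complex.norm_real, Real.norm_eq_abs, abs_of_nonneg hdpos.le]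
    rw [hden, Complex.norm_real, Real.norm_eq_abs]
    rw [div_le_iff₀ hdpos]
    rcases le_or_gt t (1/2) with hhalf | hhalf
    · refine le_trans est1 ?_
      have h2t : t ^ qq = t ^ (qq - 1) * t := by
        rw [← Real.rpow_add_one ht0.ne' (qq - 1), sub_add_cancel]
      have hs0 : 0 ≤ (1 - t) ^ (qq - 1) := Real.rpow_nonneg (by linarith) _
      have ht0q : 0 ≤ t ^ (qq - 1) := Real.rpow_nonneg ht0.le _
      have hhh : 4 * n * L * K ^ qq * t ^ qq
          ≤ 8 * n * L * K ^ qq * (t ^ (qq - 1) * (t * (1 - t))) := by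
        rw [h2t]
        have h7 : 0 ≤ (n : ℝ) * L * K ^ qq := by positivity
        nlinarith [mul_nonneg (mul_nonneg h7 ht0q) ht0.le]
      refine hhh.trans ?_
      have h8 : 0 ≤ 8 * (n:ℝ) * L * K ^ qq := by positivity
      nlinarith [mul_nonneg (mul_nonneg h8 hs0) hdpos.le]
    · refine le_trans est2 ?_
      have h2t : (1 - t) ^ qq = (1 - t) ^ (qq - 1) * (1 - t) := by
        rw [← Real.rpow_add_one (by intro hcon; nlinarith [hcon] : (1:ℝ) - t ≠ 0) (qq - 1),
          sub_add_cancel]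
      have hs0 : 0 ≤ t ^ (qq - 1) := Real.rpow_nonneg ht0.le _
      have ht0q : 0 ≤ (1 - t) ^ (qq - 1) := Real.rpow_nonneg (by linarith) _
      have hhh : 4 * n * L * K ^ qq * (1 - t) ^ qq
          ≤ 8 * n * L * K ^ qq * ((1 - t) ^ (qq - 1) * (t * (1 - t))) := by
        rw [h2t]
        have h7 : 0 ≤ (n : ℝ) * L * K ^ qq := by positivity
        nlinarith [mul_nonneg (mul_nonneg h7 ht0q) (by linarith : (0:ℝ) ≤ 1 - t)]
      refine hhh.trans ?_
      have h8 : 0 ≤ 8 * (n:ℝ) * L * K ^ qq := by positivity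
      nlinarith [mul_nonneg (mul_nonneg h8 hs0) hdpos.le]
  -- integrability of the bound
  have hint : IntervalIntegrable
      (fun t : ℝ => (8 * n * L * K ^ qq) * (t ^ (qq - 1) + (1 - t) ^ (qq - 1)))
      volume 0 1 := by
    have h1 : IntervalIntegrable (fun t : ℝ => t ^ (qq - 1)) volume 0 1 :=
      intervalIntegral.intervalIntegrable_rpow' (by linarith)
    have h2 : IntervalIntegrable (fun t : ℝ => (1 - t) ^ (qq - 1)) volume 0 1 := by
      have := h1.comp_sub_left 1
      norm_num at this
      exact this.symm
    exact (h1.add h2).const_mul _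
  have hJ0 : 0 ≤ ∫ t in (0:ℝ)..1, (t ^ (qq - 1) + (1 - t) ^ (qq - 1)) := by
    refine intervalIntegral.integral_nonneg zero_le_one fun u hu => ?_
    exact add_nonneg (Real.rpow_nonneg hu.1 _) (Real.rpow_nonneg (by linarith [hu.2]) _)
  have hbig := intervalIntegral.norm_integral_le_abs_of_norm_le
    (f := fun t : ℝ => ((cfc g (t • B₁ + (1 - t) • B₂)).trace - t • (cfc g B₁).trace
          - (1 - t) • (cfc g B₂).trace) / ((t * (1 - t) : ℝ) : ℂ))
    (μ := volume) (a := 0) (b := 1)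
    (g := fun t : ℝ => (8 * n * L * K ^ qq) * (t ^ (qq - 1) + (1 - t) ^ (qq - 1)))
    (by
      rw [Set.uIoc_of_le (zero_le_one)]
      refine (MeasureTheory.ae_restrict_iff' measurableSet_Ioc).mpr (Filter.Eventually.of_forall ?_)
      exact key) hint
  -- conclude
  have hfin : ‖frakU (fun M => cfc g M) B₁ B₂‖
      ≤ ‖∫ t in (0:ℝ)..1,
          ((cfc g (t • B₁ + (1 - t) • B₂)).trace - t • (cfc g B₁).trace
            - (1 - t) • (cfc g B₂).trace) / ((t * (1 - t) : ℝ) : ℂ)‖ := by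
    rw [frakU, norm_smul]
    have h2 : ‖((2 * Real.pi) ^ 2)⁻¹‖ ≤ 1 := by
      rw [Real.norm_eq_abs, abs_of_nonneg (by positivity)]
      rw [inv_le_one_iff₀]
      right
      nlinarith [Real.pi_gt_three]
    exact mul_le_of_le_one_left (norm_nonneg _) h2
  refine hfin.trans (hbig.trans ?_)
  rw [intervalIntegral.integral_const_mul, abs_mul, abs_of_nonneg (by positivity : (0:ℝ) ≤ 8 * n * L * K ^ qq), abs_of_nonneg hJ0]


/-! ### Final auxiliary lemmas -/

lemma sum_sq_le_sq_sum {ι : Type*} [Fintype ι] (f : ι → ℝ) (hf : ∀ i, 0 ≤ f i) :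
    ∑ i, (f i)^2 ≤ (∑ i, f i)^2 := by
  have h1 : ∀ i, (f i)^2 ≤ f i * ∑ j, f j := by
    intro i
    rw [sq]
    exact mul_le_mul_of_nonneg_left
      (Finset.single_le_sum (fun j _ => hf j) (Finset.mem_univ i)) (hf i)
  calc ∑ i, (f i)^2 ≤ ∑ i, f i * ∑ j, f j := Finset.sum_le_sum fun i _ => h1 i
    _ = (∑ i, f i)^2 := by rw [← Finset.sum_mul, sq]

lemma fnorm_le_sum {n} (M : Mat n) : fnorm M ≤ ∑ i, ∑ j, ‖M i j‖ := by
  have h1 : (∑ i, ∑ j, ‖M i j‖^2 : ℝ) ≤ (∑ i, ∑ j, ‖M i j‖)^2 := by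
    have := sum_sq_le_sq_sum (fun z : Fin n × Fin n => ‖M z.1 z.2‖) (fun z => norm_nonneg _)
    simpa [Fintype.sum_prod_type] using this
  calc fnorm M ≤ Real.sqrt ((∑ i, ∑ j, ‖M i j‖)^2) := Real.sqrt_le_sqrt h1
    _ = _ := Real.sqrt_sq (by positivity)

lemma norm_normalAt_le_one {d : ℕ} (Ω : Set (E d)) (x : E d) : ‖normalAt Ω x‖ ≤ 1 := by
  rw [normalAt]
  split_ifs with h
  · rw [h.choose_spec.1]
  · simp

lemma finite_of_surf {s : Set (E 1)} (h : surfMeasure 1 s < ⊤) : s.Finite := by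
  rw [surfMeasure] at h
  have he : ((1:ℕ):ℝ) - 1 = 0 := by norm_num
  rw [he] at h
  by_contra hfin
  have hinf : s.Infinite := hfin
  obtain ⟨k, hk⟩ := ENNReal.exists_nat_gt h.ne
  obtain ⟨t, hts, htc⟩ := hinf.exists_subset_card_eq k
  have hmt : MeasureTheory.Measure.hausdorffMeasure 0 (↑t : Set (E 1)) = k := by
    have h2 : (↑t : Set (E 1)) = ⋃ x ∈ t, {x} := by ext y; simp
    have hd : (↑t : Set (E 1)).PairwiseDisjoint (fun x => ({x} : Set (E 1))) := by
      intro a _ b _ hab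
      simpa using hab
    have hm : ∀ b ∈ t, MeasurableSet ({b} : Set (E 1)) := fun b _ =>
      MeasurableSet.singleton b
    rw [h2, MeasureTheory.measure_biUnion_finset hd hm]
    simp only [MeasureTheory.Measure.hausdorffMeasure_zero_singleton]
    rw [Finset.sum_const, htc, nsmul_eq_mul, mul_one]
  have h3 : (k : ℝ≥0∞) ≤ MeasureTheory.Measure.hausdorffMeasure 0 s := by
    rw [← hmt]
    exact MeasureTheory.measure_mono hts
  exact absurd (h3.trans_lt hk) (lt_irrefl _)

/-- Lemma 4.19 of the paper: bound on the boundary coefficient for test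
functions with a Hölder singularity, `|𝔚₁(𝔘(g;A₁,A₂);∂Λ,∂Γ)| ≤ C R^{γ−q} ⦀g⦀₂`
with `C` independent of `g` and `R`. -/
theorem statement17 (d n : ℕ) (hd : 0 < d) (hn : 0 < n)
    (γ : ℝ) (hγ0 : 0 < γ) (hγ1 : γ ≤ 1)
    (A₁ A₂ : E d → E d → Mat n) (hA₁ : IsSymbol A₁) (hA₂ : IsSymbol A₂)
    (hH₁ : ∀ x ξ, (A₁ x ξ).IsHermitian) (hH₂ : ∀ x ξ, (A₂ x ξ).IsHermitian)
    (Λ Γ : Set (E d))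
    (hΛ : surfMeasure d (frontier Λ) < ⊤) (hΓ : surfMeasure d (frontier Γ) < ⊤)
    (q : ℝ) (hq0 : 0 < q) (hqγ : q < γ) :
    ∃ C : ℝ, 0 < C ∧
      ∀ (x₀ R : ℝ), 0 < R → ∀ g : ℝ → ℝ, AssumptionHS γ x₀ R g →
        ‖W1 (fun x ξ => frakU (fun M => cfc g M) (A₁ x ξ) (A₂ x ξ)) Λ Γ‖ ≤
          C * R ^ (γ - q) * hsNorm γ x₀ R g 2 := by
  classical
  have hq1 : q ≤ 1 := hqγ.le.trans hγ1
  -- uniform bound on the symbols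
  choose C₁ hC₁ using hA₁.bounded
  choose C₂ hC₂ using hA₂.bounded
  set KA : ℝ := max (∑ i, ∑ j, (C₁ i j 0 + C₂ i j 0)) 0 with hKA
  have hKA0 : 0 ≤ KA := le_max_right _ _
  have hKbd : ∀ x ξ : E d, fnorm (A₁ x ξ - A₂ x ξ) ≤ KA := by
    intro x ξ
    refine (fnorm_le_sum _).trans (le_trans ?_ (le_max_left _ _))
    refine Finset.sum_le_sum fun i _ => Finset.sum_le_sum fun j _ => ?_
    have h1 := hC₁ i j 0 (x, ξ)
    have h2 := hC₂ i j 0 (x, ξ)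
    rw [norm_iteratedFDeriv_zero] at h1 h2
    calc ‖(A₁ x ξ - A₂ x ξ) i j‖ = ‖A₁ x ξ i j - A₂ x ξ i j‖ := by rw [Matrix.sub_apply]
      _ ≤ ‖A₁ x ξ i j‖ + ‖A₂ x ξ i j‖ := norm_sub_le _ _
      _ ≤ C₁ i j 0 + C₂ i j 0 := add_le_add h1 h2
  set J : ℝ := ∫ t in (0:ℝ)..1, (t ^ (q - 1) + (1 - t) ^ (q - 1)) with hJ
  have hJ0 : 0 ≤ J := by
    rw [hJ]
    refine intervalIntegral.integral_nonneg zero_le_one fun u hu => ?_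
    exact add_nonneg (Real.rpow_nonneg hu.1 _) (Real.rpow_nonneg (by linarith [hu.2]) _)
  set Cb : ℝ := 32 * n * KA ^ q * J with hCb
  have hCb0 : 0 ≤ Cb := by
    rw [hCb]
    exact mul_nonneg (mul_nonneg (mul_nonneg (by norm_num) (Nat.cast_nonneg n))
      (Real.rpow_nonneg hKA0 q)) hJ0
  -- pointwise bound on the symbol of the boundary coefficient
  have hMb : ∀ (x₀ R : ℝ), 0 < R → ∀ g : ℝ → ℝ, AssumptionHS γ x₀ R g → ∀ x ξ : E d,
      ‖frakU (fun M => cfc g M) (A₁ x ξ) (A₂ x ξ)‖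
        ≤ Cb * (R ^ (γ - q) * hsNorm γ x₀ R g 2) := by
    intro x₀ R hR g hg x ξ
    have hG0 := (hsNorm_pt hγ0 hR hg).1
    have hL0 : 0 ≤ 4 * (hsNorm γ x₀ R g 2 * R ^ (γ - q)) :=
      mul_nonneg (by norm_num) (mul_nonneg hG0 (Real.rpow_nonneg hR.le _))
    have hb := frakU_bound g (4 * (hsNorm γ x₀ R g 2 * R ^ (γ - q))) q hL0 hq0 hq1
      (g_holder hγ0 hγ1 hR hg hq0 hqγ hq1) (A₁ x ξ) (A₂ x ξ) (hH₁ x ξ) (hH₂ x ξ)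
      KA (hKbd x ξ)
    rw [← hJ] at hb
    refine hb.trans (le_of_eq ?_)
    rw [hCb]; ring
  by_cases hd1 : d = 1
  · -- one-dimensional case : finite frontiers
    subst hd1
    have hfinP : (frontier Λ ×ˢ frontier Γ).Finite :=
      (finite_of_surf hΛ).prod (finite_of_surf hΓ)
    refine ⟨(Nat.card ↥(frontier Λ ×ˢ frontier Γ)) * Cb + 1, ?_, ?_⟩
    · have h0 : (0:ℝ) ≤ (Nat.card ↥(frontier Λ ×ˢ frontier Γ)) * Cb :=
        mul_nonneg (Nat.cast_nonneg _) hCb0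
      linarith
    intro x₀ R hR g hg
    have hG0 := (hsNorm_pt hγ0 hR hg).1
    have hRG : 0 ≤ R ^ (γ - q) * hsNorm γ x₀ R g 2 :=
      mul_nonneg (Real.rpow_nonneg hR.le _) hG0
    simp only [W1, if_true]
    haveI := hfinP.fintype
    rw [tsum_fintype]
    refine le_trans (norm_sum_le _ _) ?_
    have step : ∀ p : ↥(frontier Λ ×ˢ frontier Γ),
        ‖frakU (fun M => cfc g M) (A₁ (p : E 1 × E 1).1 (p : E 1 × E 1).2)
          (A₂ (p : E 1 × E 1).1 (p : E 1 × E 1).2)‖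
          ≤ Cb * (R ^ (γ - q) * hsNorm γ x₀ R g 2) :=
      fun p => hMb x₀ R hR g hg _ _
    refine le_trans (Finset.sum_le_sum fun p _ => step p) ?_
    rw [Finset.sum_const, Finset.card_univ, nsmul_eq_mul]
    have hcard : ((Fintype.card ↥(frontier Λ ×ˢ frontier Γ) : ℕ) : ℝ)
        = ((Nat.card ↥(frontier Λ ×ˢ frontier Γ) : ℕ) : ℝ) := by
      rw [Nat.card_eq_fintype_card]
    rw [hcard]
    nlinarith [hRG, mul_nonneg (mul_nonneg (Nat.cast_nonneg
      (Nat.card ↥(frontier Λ ×ˢ frontier Γ)) : (0:ℝ) ≤ _) hCb0) hRG]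
  · -- higher-dimensional case
    refine ⟨Cb * (surfMeasure d (frontier Γ)).toReal * (surfMeasure d (frontier Λ)).toReal + 1,
      ?_, ?_⟩
    · have h0 : (0:ℝ) ≤ Cb * (surfMeasure d (frontier Γ)).toReal
          * (surfMeasure d (frontier Λ)).toReal :=
        mul_nonneg (mul_nonneg hCb0 ENNReal.toReal_nonneg) ENNReal.toReal_nonneg
      linarith
    intro x₀ R hR g hg
    have hG0 := (hsNorm_pt hγ0 hR hg).1
    have hRG : 0 ≤ R ^ (γ - q) * hsNorm γ x₀ R g 2 :=
      mul_nonneg (Real.rpow_nonneg hR.le _) hG0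
    have hMb0 : 0 ≤ Cb * (R ^ (γ - q) * hsNorm γ x₀ R g 2) := mul_nonneg hCb0 hRG
    haveI instΓ : IsFiniteMeasure ((surfMeasure d).restrict (frontier Γ)) :=
      ⟨by rwa [MeasureTheory.Measure.restrict_apply_univ]⟩
    haveI instΛ : IsFiniteMeasure ((surfMeasure d).restrict (frontier Λ)) :=
      ⟨by rwa [MeasureTheory.Measure.restrict_apply_univ]⟩
    simp only [W1]
    rw [if_neg hd1, norm_smul]
    have hsc : ‖((2 * Real.pi) ^ (d - 1))⁻¹‖ ≤ 1 := by
      rw [Real.norm_eq_abs, abs_of_nonneg (by positivity)]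
      have h2π : (1:ℝ) ≤ (2 * Real.pi) ^ (d - 1) :=
        one_le_pow₀ (by nlinarith [Real.pi_gt_three])
      exact inv_le_one_of_one_le₀ h2π
    refine le_trans (mul_le_of_le_one_left (norm_nonneg _) hsc) ?_
    have hin : ∀ x : E d,
        ‖∫ ξ in frontier Γ, |⟪normalAt Λ x, normalAt Γ ξ⟫| •
            frakU (fun M => cfc g M) (A₁ x ξ) (A₂ x ξ) ∂(surfMeasure d)‖
          ≤ (Cb * (R ^ (γ - q) * hsNorm γ x₀ R g 2))
              * ((surfMeasure d) (frontier Γ)).toReal := by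
      intro x
      have h1 := MeasureTheory.norm_integral_le_of_norm_le_const
        (μ := (surfMeasure d).restrict (frontier Γ))
        (f := fun ξ => |⟪normalAt Λ x, normalAt Γ ξ⟫| •
            frakU (fun M => cfc g M) (A₁ x ξ) (A₂ x ξ))
        (C := Cb * (R ^ (γ - q) * hsNorm γ x₀ R g 2))
        (Filter.Eventually.of_forall fun ξ => ?_)
      · rwa [MeasureTheory.measureReal_def, MeasureTheory.Measure.restrict_apply_univ] at h1
      · rw [norm_smul, Real.norm_eq_abs, abs_abs]
        have hip : |⟪normalAt Λ x, normalAt Γ ξ⟫| ≤ 1 := by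
          refine le_trans (abs_real_inner_le_norm _ _) ?_
          calc ‖normalAt Λ x‖ * ‖normalAt Γ ξ‖ ≤ 1 * 1 :=
                mul_le_mul (norm_normalAt_le_one _ _) (norm_normalAt_le_one _ _)
                  (norm_nonneg _) zero_le_one
            _ = 1 := mul_one 1
        calc |⟪normalAt Λ x, normalAt Γ ξ⟫|
              * ‖frakU (fun M => cfc g M) (A₁ x ξ) (A₂ x ξ)‖
            ≤ 1 * (Cb * (R ^ (γ - q) * hsNorm γ x₀ R g 2)) :=
              mul_le_mul hip (hMb x₀ R hR g hg x ξ) (norm_nonneg _) zero_le_one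
          _ = Cb * (R ^ (γ - q) * hsNorm γ x₀ R g 2) := one_mul _
    have hout := MeasureTheory.norm_integral_le_of_norm_le_const
      (μ := (surfMeasure d).restrict (frontier Λ))
      (f := fun x => ∫ ξ in frontier Γ, |⟪normalAt Λ x, normalAt Γ ξ⟫| •
          frakU (fun M => cfc g M) (A₁ x ξ) (A₂ x ξ) ∂(surfMeasure d))
      (C := (Cb * (R ^ (γ - q) * hsNorm γ x₀ R g 2))
          * ((surfMeasure d) (frontier Γ)).toReal)
      (Filter.Eventually.of_forall hin)
    rw [MeasureTheory.measureReal_def, MeasureTheory.Measure.restrict_apply_univ] at hout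
    refine le_trans hout ?_
    nlinarith [hRG, mul_nonneg (mul_nonneg (mul_nonneg hCb0
        (ENNReal.toReal_nonneg (a := surfMeasure d (frontier Γ))))
        (ENNReal.toReal_nonneg (a := surfMeasure d (frontier Λ)))) hRG,
      ENNReal.toReal_nonneg (a := surfMeasure d (frontier Γ)),
      ENNReal.toReal_nonneg (a := surfMeasure d (frontier Λ))]

end Widom
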